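/- If D = diag(α₁, α₂, α₃) with all αᵢ nonzero real numbers, then there exists a unit vector j ∈ ℝ³ such that the matrix M v = i (j × (D v)) has a simple eigenvalue with strictly positive real part. -/

import Mathlib

/-!
For every `j`, the matrix of `v ↦ i (j × D v)` is `[i j]ₓ D`, whose characteristic polynomial is
`X³ - s X` with `s = j₀² α₂α₃ + j₁² α₁α₃ + j₂² α₁α₂`. The three pairwise products `αₖαₗ` multiply
to the square `(α₁α₂α₃)² > 0`, so one of them is positive; taking `j` the complementary basis
vector makes `s > 0`. Then `√s` is a root of `X³ - s X` at which the derivative `3X² - s` equals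
`2s ≠ 0`, i.e. a simple eigenvalue with positive real part.
-/

open Matrix Polynomial

theorem Polynomial.rootMultiplicity_eq_one_of_isRoot {R : Type*} [CommRing R] {p : R[X]} {t : R}
    (hp : p.IsRoot t) (hp' : ¬(derivative p).IsRoot t) : p.rootMultiplicity t = 1 := by
  have hp0 : p ≠ 0 := by rintro rfl; simp at hp'
  have hpos := (rootMultiplicity_pos hp0).2 hp
  have hle := mt (one_lt_rootMultiplicity_iff_isRoot hp0).1 (by tauto)
  omega

theorem Polynomial.rootMultiplicity_X_pow_three_sub_C_mul_X {K : Type*} [Field K]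
    [NeZero (2 : K)] {μ : K} (hμ : μ ≠ 0) : (X ^ 3 - C (μ ^ 2) * X).rootMultiplicity μ = 1 := by
  refine rootMultiplicity_eq_one_of_isRoot (by simp; ring) ?_
  have : (2 : K) * μ ^ 2 ≠ 0 := mul_ne_zero two_ne_zero (pow_ne_zero 2 hμ)
  rw [derivative_sub, derivative_X_pow, derivative_C_mul_X]
  contrapose! this
  simp at this
  linear_combination this

def crossMatrix {R : Type*} [Ring R] (u : Fin 3 → R) : Matrix (Fin 3) (Fin 3) R :=
  !![0, -u 2, u 1; u 2, 0, -u 0; -u 1, u 0, 0]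

section crossMatrix

variable {R : Type*} [CommRing R]

theorem crossMatrix_mulVec (u v : Fin 3 → R) : crossMatrix u *ᵥ v = u ⨯₃ v := by
  ext i
  fin_cases i <;> simp [crossMatrix, cross_apply, mulVec, dotProduct, Fin.sum_univ_three] <;> ring

theorem crossMatrix_mul_diagonal (u d : Fin 3 → R) :
    crossMatrix u * diagonal d =
      !![0, -u 2 * d 1, u 1 * d 2; u 2 * d 0, 0, -u 0 * d 2; -u 1 * d 0, u 0 * d 1, 0] := by
  ext i j
  fin_cases i <;> fin_cases j <;> simp [crossMatrix, mul_diagonal]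

theorem charpoly_crossMatrix_mul_diagonal (u d : Fin 3 → R) :
    (crossMatrix u * diagonal d).charpoly =
      X ^ 3 + C (u 0 ^ 2 * (d 1 * d 2) + u 1 ^ 2 * (d 0 * d 2) + u 2 ^ 2 * (d 0 * d 1)) * X := by
  rw [crossMatrix_mul_diagonal, charpoly, det_fin_three]
  simp [Fin.ext_iff]
  ring

end crossMatrix

theorem exists_pos_re_rootMultiplicity_charpoly_eq_one {n : Type*} [Fintype n] [DecidableEq n]
    {M : Matrix n n ℂ} {s : ℝ} (hs : 0 < s) (hM : M.charpoly = X ^ 3 - C (s : ℂ) * X) :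
    ∃ μ ∈ spectrum ℂ M, 0 < μ.re ∧ M.charpoly.rootMultiplicity μ = 1 := by
  have hsq : ((√s : ℝ) : ℂ) ^ 2 = s := by rw [← Complex.ofReal_pow, Real.sq_sqrt hs.le]
  have hμ : ((√s : ℝ) : ℂ) ≠ 0 := by exact_mod_cast (Real.sqrt_pos.2 hs).ne'
  rw [hM, ← hsq]
  refine ⟨√s, mem_spectrum_of_isRoot_charpoly ?_, by simpa using hs,
    rootMultiplicity_X_pow_three_sub_C_mul_X hμ⟩
  rw [hM, ← hsq]
  simp
  ring

theorem exists_pos_mul_of_ne_zero {a b c : ℝ} (ha : a ≠ 0) (hb : b ≠ 0) (hc : c ≠ 0) :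
    0 < b * c ∨ 0 < a * c ∨ 0 < a * b := by
  by_contra! h
  obtain ⟨hbc, hac, hab⟩ := h
  have hprod : 0 < a * b * (b * c) * (a * c) := by
    have : 0 < (a * b * c) ^ 2 := by positivity
    linarith [show (a * b * c) ^ 2 = a * b * (b * c) * (a * c) by ring]
  exact hprod.not_ge (mul_nonpos_of_nonneg_of_nonpos (mul_nonneg_of_nonpos_of_nonpos hab hbc) hac)

theorem exists_sum_sq_eq_one_and_weighted_sum_pos {a b c : ℝ} (ha : a ≠ 0) (hb : b ≠ 0)
    (hc : c ≠ 0) :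
    ∃ j : Fin 3 → ℝ, j 0 ^ 2 + j 1 ^ 2 + j 2 ^ 2 = 1 ∧
      0 < j 0 ^ 2 * (b * c) + j 1 ^ 2 * (a * c) + j 2 ^ 2 * (a * b) := by
  rcases exists_pos_mul_of_ne_zero ha hb hc with h | h | h
  · exact ⟨![1, 0, 0], by simp, by simpa⟩
  · exact ⟨![0, 1, 0], by simp, by simpa⟩
  · exact ⟨![0, 0, 1], by simp, by simpa⟩

theorem exists_unit_j_simple_unstable_eigenvalue (α₁ α₂ α₃ : ℝ)
    (h₁ : α₁ ≠ 0) (h₂ : α₂ ≠ 0) (h₃ : α₃ ≠ 0) :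
    ∃ j : Fin 3 → ℝ, j 0 ^ 2 + j 1 ^ 2 + j 2 ^ 2 = 1 ∧
      ∀ M : Matrix (Fin 3) (Fin 3) ℂ,
        (∀ v : Fin 3 → ℂ, M.mulVec v =
          Complex.I • crossProduct (fun k => ((j k : ℝ) : ℂ))
            ((Matrix.diagonal ![(α₁ : ℂ), (α₂ : ℂ), (α₃ : ℂ)]).mulVec v)) →
        ∃ μ : ℂ, μ ∈ spectrum ℂ M ∧ 0 < μ.re ∧
          Polynomial.rootMultiplicity μ (Matrix.charpoly M) = 1 := by
  obtain ⟨j, hj, hs⟩ := exists_sum_sq_eq_one_and_weighted_sum_pos h₁ h₂ h₃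
  refine ⟨j, hj, fun M hM => exists_pos_re_rootMultiplicity_charpoly_eq_one hs ?_⟩
  have hM' : M = crossMatrix (Complex.I • fun k => (j k : ℂ)) *
      diagonal ![(α₁ : ℂ), (α₂ : ℂ), (α₃ : ℂ)] := by
    refine ext_iff_mulVec.2 fun v => ?_
    rw [hM, ← mulVec_mulVec, crossMatrix_mulVec, LinearMap.map_smul₂]
  rw [hM', charpoly_crossMatrix_mul_diagonal, sub_eq_add_neg, ← neg_mul, ← map_neg]
  congr 3
  simp only [Pi.smul_apply, smul_eq_mul, mul_pow, Complex.I_sq]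
  push_cast
  ring
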